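/- Let d ≥ 1, λ ∈ [0,1), and let (X_n) be the biased random walk RW_λ on ℤ^d, and (Z_n) the drifted random walk with steps +e_i w.p. 1/(d(1+λ)) and −e_i w.p. λ/(d(1+λ)). Then for every k ∈ ℤ_+^d and n ≥ 0, P_0(X_n = k) ≤ P(Z_n = k | Z_0 = 0). -/

import Mathlib

/-!
Compare the two walks path by path. Every step of `RW_λ` leaves the point with weight
`λ` (towards the origin) or `1` (away from it) divided by `2d + (λ - 1) d_v^-`, and this
denominator is at least `d (1 + λ)`, the denominator of the drifted walk. On a path from `0`
to a point of `ℤ_+^d` the ℓ¹-norm and the coordinate sum change by `±1` at every step and have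
the same endpoints, so the number of steps towards the origin equals the number of negative
steps. Hence each path has at most the weight under `RW_λ` that it has under the drifted walk.
-/

open scoped Classical

/-- The step `±e_i`. -/
def stepVec (d : ℕ) (i : Fin d) (b : Bool) : Fin d → ℤ :=
  fun j => if j = i then (if b then 1 else -1) else 0

/-- Step probability of the drifted random walk. -/
noncomputable def stepProb (d : ℕ) (lam : ℝ) (b : Bool) : ℝ :=
  if b then 1 / (d * (1 + lam)) else lam / (d * (1 + lam))

/-- `P(Z_n = k | Z_0 = 0)` for the drifted random walk. -/
noncomputable def ZProb (d : ℕ) (lam : ℝ) (n : ℕ) (k : Fin d → ℤ) : ℝ :=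
  ∑ ω : Fin n → Fin d × Bool,
    (∏ j, stepProb d lam (ω j).2) *
      (if (∑ j, stepVec d (ω j).1 (ω j).2) = k then 1 else 0)

/-- Transition probability of `RW_λ` on `ℤ^d` for nearest-neighbor pairs. -/
noncomputable def ptrans (d : ℕ) (lam : ℝ) (v u : Fin d → ℤ) : ℝ :=
  if (∑ i, |u i|) < (∑ i, |v i|) then
    lam / (2 * d + (lam - 1) * ((d : ℝ) - (Finset.univ.filter (fun i => v i = 0)).card))
  else
    1 / (2 * d + (lam - 1) * ((d : ℝ) - (Finset.univ.filter (fun i => v i = 0)).card))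

/-- Position after `j` steps of the path encoded by `ω`, started at the origin. -/
def Xpos (d n : ℕ) (ω : Fin n → Fin d × Bool) (j : ℕ) : Fin d → ℤ :=
  ∑ l : Fin n, if (l : ℕ) < j then stepVec d (ω l).1 (ω l).2 else 0

/-- `P_0(X_n = k)` for the biased random walk `RW_λ`, as a sum over paths. -/
noncomputable def XProb (d : ℕ) (lam : ℝ) (n : ℕ) (k : Fin d → ℤ) : ℝ :=
  ∑ ω : Fin n → Fin d × Bool,
    (∏ j : Fin n, ptrans d lam (Xpos d n ω j) (Xpos d n ω (j + 1))) *
      (if Xpos d n ω n = k then 1 else 0)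

open Finset

theorem two_mul_card_descents_eq {n : ℕ} (f : ℕ → ℤ) (hf : ∀ j : Fin n, |f (j + 1) - f j| = 1) :
    2 * (#{j : Fin n | f (j + 1) < f j} : ℤ) = n - (f n - f 0) := by
  have hstep : ∀ j : Fin n, f (j + 1) - f j = 1 - 2 * if f (j + 1) < f j then 1 else 0 := by
    intro j
    have := hf j
    split_ifs <;> rw [abs_eq zero_le_one] at this <;> omega
  have htelescope : ∑ j : Fin n, (f (j + 1) - f j) = f n - f 0 := by
    rw [Fin.sum_univ_eq_sum_range (fun m => f (m + 1) - f m)]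
    exact sum_range_sub f n
  rw [← htelescope, sum_congr rfl fun j _ => hstep j, sum_sub_distrib, ← mul_sum, sum_boole]
  simp

theorem card_descents_eq_of_sub_eq {n : ℕ} {f g : ℕ → ℤ}
    (hf : ∀ j : Fin n, |f (j + 1) - f j| = 1) (hg : ∀ j : Fin n, |g (j + 1) - g j| = 1)
    (hfg : f n - f 0 = g n - g 0) :
    #{j : Fin n | f (j + 1) < f j} = #{j : Fin n | g (j + 1) < g j} := by
  have := two_mul_card_descents_eq f hf
  have := two_mul_card_descents_eq g hg
  omega

theorem abs_abs_add_sub_abs_of_abs_eq_one (x s : ℤ) (hs : |s| = 1) : |(|x + s| - |x|)| = 1 := by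
  cases abs_cases x <;> cases abs_cases (x + s) <;> cases abs_cases s <;> grind

section Steps

variable {d : ℕ}

theorem sum_add_stepVec (v : Fin d → ℤ) (i : Fin d) (b : Bool) :
    ∑ i', (v + stepVec d i b) i' = ∑ i', v i' + if b then 1 else -1 := by
  simp [sum_add_distrib, stepVec]

theorem abs_sum_abs_add_stepVec_sub (v : Fin d → ℤ) (i : Fin d) (b : Bool) :
    abs (∑ i', |(v + stepVec d i b) i'| - ∑ i', |v i'|) = 1 := by
  rw [← sum_sub_distrib, sum_eq_single i (fun i' _ hne => by simp [stepVec, hne]) (by simp)]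
  refine abs_abs_add_sub_abs_of_abs_eq_one _ _ ?_
  cases b <;> simp [stepVec]

end Steps

section Path

variable {d n : ℕ} (ω : Fin n → Fin d × Bool)

@[simp]
theorem Xpos_zero : Xpos d n ω 0 = 0 := by
  simp [Xpos]

theorem Xpos_succ (j : Fin n) :
    Xpos d n ω (j + 1) = Xpos d n ω j + stepVec d (ω j).1 (ω j).2 := by
  have hsingle : stepVec d (ω j).1 (ω j).2 = ∑ l, if l = j then stepVec d (ω l).1 (ω l).2 else 0 :=
    by simp
  rw [hsingle, Xpos, Xpos, ← sum_add_distrib]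
  refine sum_congr rfl fun l _ => ?_
  rcases lt_trichotomy (l : ℕ) j with h | h | h
  · simp [h, Nat.lt_succ_of_lt h, Fin.ne_of_lt h]
  · simp [Fin.ext h]
  · rw [if_neg (by omega), if_neg (by omega), if_neg (Fin.ne_of_gt h), add_zero]

theorem Xpos_self : Xpos d n ω n = ∑ l, stepVec d (ω l).1 (ω l).2 :=
  sum_congr rfl fun l _ => if_pos l.isLt

theorem card_descents_eq_card_negSteps (hk : ∀ i, 0 ≤ Xpos d n ω n i) :
    #{j : Fin n | ∑ i, |Xpos d n ω (j + 1) i| < ∑ i, |Xpos d n ω j i|} =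
      #{j : Fin n | (ω j).2 = false} := by
  have hsum (j : Fin n) :
      ∑ i, Xpos d n ω (j + 1) i = ∑ i, Xpos d n ω j i + if (ω j).2 then 1 else -1 := by
    rw [Xpos_succ, sum_add_stepVec]
  have hdesc : ∀ j : Fin n,
      ∑ i, Xpos d n ω (j + 1) i < ∑ i, Xpos d n ω j i ↔ (ω j).2 = false := by
    intro j
    rw [hsum]
    cases (ω j).2 <;> simp
  simp_rw [← hdesc]
  refine card_descents_eq_of_sub_eq (f := fun m => ∑ i, |Xpos d n ω m i|)
    (g := fun m => ∑ i, Xpos d n ω m i) (fun j => ?_) (fun j => ?_) ?_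
  · rw [Xpos_succ]; exact abs_sum_abs_add_stepVec_sub _ _ _
  · rw [hsum]; cases (ω j).2 <;> simp
  · simp [abs_of_nonneg (hk _)]

end Path

section Weights

variable {d : ℕ} {lam : ℝ}

theorem mul_one_add_le_ptrans_denom (h1 : lam ≤ 1) (v : Fin d → ℤ) :
    (d : ℝ) * (1 + lam) ≤ 2 * d + (lam - 1) * ((d : ℝ) - #{i | v i = 0}) := by
  have hzeros : (#{i | v i = 0} : ℝ) ≤ d := by
    exact_mod_cast (card_filter_le _ _).trans (card_univ.trans (Fintype.card_fin d)).le
  nlinarith [(#{i | v i = 0}).cast_nonneg (α := ℝ)]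

theorem ptrans_le_div (hd : 1 ≤ d) (h0 : 0 ≤ lam) (h1 : lam ≤ 1) (v u : Fin d → ℤ) :
    ptrans d lam v u ≤
      (if ∑ i, |u i| < ∑ i, |v i| then lam else 1) / (d * (1 + lam)) := by
  have hpos : (0 : ℝ) < d * (1 + lam) := by positivity
  have hden := mul_one_add_le_ptrans_denom h1 v
  unfold ptrans
  split_ifs
  · exact div_le_div_of_nonneg_left h0 hpos hden
  · exact div_le_div_of_nonneg_left zero_le_one hpos hden

theorem ptrans_nonneg (hd : 1 ≤ d) (h0 : 0 ≤ lam) (h1 : lam ≤ 1) (v u : Fin d → ℤ) :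
    0 ≤ ptrans d lam v u := by
  have hden := (show (0 : ℝ) < d * (1 + lam) by positivity).trans_le
    (mul_one_add_le_ptrans_denom h1 v)
  unfold ptrans
  split_ifs <;> positivity

theorem stepProb_eq (b : Bool) :
    stepProb d lam b = (if b = false then lam else 1) / (d * (1 + lam)) := by
  cases b <;> simp [stepProb]

theorem prod_ite_div {n : ℕ} (p : Fin n → Prop) [DecidablePred p] (a c : ℝ) :
    ∏ j, (if p j then a else 1) / c = a ^ #{j | p j} / c ^ n := by
  simp [prod_div_distrib, prod_ite]

theorem prod_ptrans_le_prod_stepProb (hd : 1 ≤ d) (h0 : 0 ≤ lam) (h1 : lam ≤ 1) {n : ℕ}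
    (ω : Fin n → Fin d × Bool) (hk : ∀ i, 0 ≤ Xpos d n ω n i) :
    ∏ j : Fin n, ptrans d lam (Xpos d n ω j) (Xpos d n ω (j + 1)) ≤
      ∏ j, stepProb d lam (ω j).2 :=
  calc ∏ j : Fin n, ptrans d lam (Xpos d n ω j) (Xpos d n ω (j + 1))
      ≤ ∏ j : Fin n, (if ∑ i, |Xpos d n ω (j + 1) i| < ∑ i, |Xpos d n ω j i| then lam else 1) /
          (d * (1 + lam)) :=
        prod_le_prod (fun _ _ => ptrans_nonneg hd h0 h1 _ _)
          fun _ _ => ptrans_le_div hd h0 h1 _ _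
    _ = ∏ j, stepProb d lam (ω j).2 := by
        simp only [stepProb_eq]
        rw [prod_ite_div, prod_ite_div, card_descents_eq_card_negSteps ω hk]

end Weights

theorem stmt15 (d : ℕ) (hd : 1 ≤ d) (lam : ℝ) (h0 : 0 ≤ lam) (h1 : lam < 1)
    (n : ℕ) (k : Fin d → ℤ) (hk : ∀ i, 0 ≤ k i) :
    XProb d lam n k ≤ ZProb d lam n k := by
  refine sum_le_sum fun ω _ => ?_
  rw [Xpos_self]
  split_ifs with hend
  · simp only [mul_one]
    refine prod_ptrans_le_prod_stepProb hd h0 h1.le ω ?_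
    rw [Xpos_self, hend]
    exact hk
  · simp
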